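/- For any g₀ ∈ Sp₂(H) and v₀ ∈ sp₂(H), the curve α(t) = g₀ e^{t v₀*} e^{t(v₀ - v₀*)} lies entirely in Sp₂(H). -/

import Mathlib

open scoped RealInnerProductSpace
open ContinuousLinearMap

noncomputable section

variable {ι H : Type*} [NormedAddCommGroup H] [InnerProductSpace ℝ H] [CompleteSpace H]

/-- `x` is a Hilbert-Schmidt operator (with respect to the Hilbert basis `b`). -/
def IsHS (b : HilbertBasis ι ℝ H) (x : H →L[ℝ] H) : Prop :=
  Summable fun i => ‖x (b i)‖ ^ 2

/-- The Hilbert-Schmidt norm `‖x‖₂`. -/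
def hsNorm (b : HilbertBasis ι ℝ H) (x : H →L[ℝ] H) : ℝ :=
  Real.sqrt (∑' i, ‖x (b i)‖ ^ 2)

/-- The trace inner product `⟨x, y⟩ = Tr (y* x)`. -/
def hsInner (b : HilbertBasis ι ℝ H) (x y : H →L[ℝ] H) : ℝ :=
  ∑' i, ⟪x (b i), y (b i)⟫

/-- `J` is a complex structure: `J² = -1` and `J* = -J`. -/
def IsCplxStruct (J : H →L[ℝ] H) : Prop :=
  J * J = -1 ∧ star J = -J

/-- The symplectic group `Sp(H)`. -/
def Sp (J : H →L[ℝ] H) : Set (H →L[ℝ] H) :=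
  {g | IsUnit g ∧ star g * J * g = J}

/-- The restricted symplectic group `Sp₂(H)`. -/
def Sp2 (b : HilbertBasis ι ℝ H) (J : H →L[ℝ] H) : Set (H →L[ℝ] H) :=
  {g | g ∈ Sp J ∧ IsHS b (g - 1)}

/-- The Banach-Lie algebra `sp₂(H) = {x ∈ B₂(H) : xJ = -Jx*}`. -/
def sp2 (b : HilbertBasis ι ℝ H) (J : H →L[ℝ] H) : Set (H →L[ℝ] H) :=
  {x | IsHS b x ∧ x * J = -(J * star x)}

/-- The Hermitian part of `sp₂(H)`. -/
def sp2h (b : HilbertBasis ι ℝ H) (J : H →L[ℝ] H) : Set (H →L[ℝ] H) :=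
  {x ∈ sp2 b J | IsSelfAdjoint x}

/-- The anti-Hermitian part of `sp₂(H)`. -/
def sp2ah (b : HilbertBasis ι ℝ H) (J : H →L[ℝ] H) : Set (H →L[ℝ] H) :=
  {x ∈ sp2 b J | star x = -x}

/-- The positive part `Sp₂⁺(H)` of the restricted symplectic group. -/
def Sp2pos (b : HilbertBasis ι ℝ H) (J : H →L[ℝ] H) : Set (H →L[ℝ] H) :=
  {g ∈ Sp2 b J | g.IsPositive}

/-- The restricted unitary group `U₂(H_J)` of unitaries commuting with `J` which are
Hilbert-Schmidt perturbations of the identity. -/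
def U2J (b : HilbertBasis ι ℝ H) (J : H →L[ℝ] H) : Set (H →L[ℝ] H) :=
  {u | star u * u = 1 ∧ u * star u = 1 ∧ u * J = J * u ∧ IsHS b (u - 1)}

open scoped Classical in
/-- The positive square root `a^{1/2}` of a positive operator (junk value otherwise). -/
def psqrt (a : H →L[ℝ] H) : H →L[ℝ] H :=
  if h : ∃ s : H →L[ℝ] H, s.IsPositive ∧ s * s = a then h.choose else 0

/-- A piecewise smooth curve parametrized on `[0,1]`. -/
def PiecewiseSmooth (α : ℝ → (H →L[ℝ] H)) : Prop :=
  ContinuousOn α (Set.Icc 0 1) ∧ ∃ n : ℕ, ∃ t : Fin (n + 1) → ℝ,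
    StrictMono t ∧ t 0 = 0 ∧ t (Fin.last n) = 1 ∧
    ∀ i : Fin n, ContDiffOn ℝ 1 α (Set.Icc (t i.castSucc) (t i.succ))

/-- Length of a curve with respect to a metric `F` on tangent vectors. -/
def lengthWith (F : (H →L[ℝ] H) → (H →L[ℝ] H) → ℝ) (α : ℝ → (H →L[ℝ] H)) : ℝ :=
  ∫ t in (0:ℝ)..1, F (α t) (deriv α t)

/-- Piecewise smooth curves inside `S` joining `p` to `q`. -/
def pathsIn (S : Set (H →L[ℝ] H)) (p q : H →L[ℝ] H) : Set (ℝ → (H →L[ℝ] H)) :=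
  {α | PiecewiseSmooth α ∧ (∀ t ∈ Set.Icc (0:ℝ) 1, α t ∈ S) ∧ α 0 = p ∧ α 1 = q}

/-- The geodesic distance in `S` associated to the metric `F`. -/
def gdist (S : Set (H →L[ℝ] H)) (F : (H →L[ℝ] H) → (H →L[ℝ] H) → ℝ)
    (p q : H →L[ℝ] H) : ℝ :=
  sInf (lengthWith F '' pathsIn S p q)

/-- The left invariant metric `I(g,v) = ‖g⁻¹ v‖₂`. -/
def leftMet (b : HilbertBasis ι ℝ H) : (H →L[ℝ] H) → (H →L[ℝ] H) → ℝ :=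
  fun g v => hsNorm b (Ring.inverse g * v)

/-- The metric of positive operators `𝔭(a,x) = ‖a^{-1/2} x a^{-1/2}‖₂`. -/
def posMet (b : HilbertBasis ι ℝ H) : (H →L[ℝ] H) → (H →L[ℝ] H) → ℝ :=
  fun a x => hsNorm b (Ring.inverse (psqrt a) * x * Ring.inverse (psqrt a))

/-- The ambient metric `𝔭_amb(g,x) = ‖x‖₂`. -/
def ambMet (b : HilbertBasis ι ℝ H) : (H →L[ℝ] H) → (H →L[ℝ] H) → ℝ :=
  fun _ x => hsNorm b x


/-! Both factors `e^{t v₀*}` and `e^{t (v₀ - v₀*)}` are exponentials of elements of the Lie algebra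
`{x | x* J + J x = 0}` of `Sp(H)`: for `v₀*` this is the defining relation of `sp₂(H)`, and then
for `v₀` it follows from `J² = -1`. For such `x` the relation `J x = -x* J` passes to
`J e^x = e^{-x*} J`, so `e^x` is symplectic. On the Hilbert-Schmidt side, `B₂(H)` is a left
ideal and `e^x - 1 = (∫₀¹ e^{s x} ds) x`, so `e^x ∈ 1 + B₂(H)` for `x ∈ B₂(H)`; and `1 + B₂(H)`
is closed under products because `g h - 1 = g (h - 1) + (g - 1)`. -/

open NormedSpace (exp)

section BanachAlgebra

variable {A : Type*} [NormedRing A] [NormedAlgebra ℝ A] [CompleteSpace A]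

theorem exp_sub_one_eq_integral_mul (x : A) :
    exp x - 1 = (∫ s in (0:ℝ)..1, exp (s • x)) * x := by
  have hint : IntervalIntegrable (fun s : ℝ => exp (s • x)) MeasureTheory.volume 0 1 :=
    (differentiable_exp_smul_const ℝ x).continuous.intervalIntegrable _ _
  calc exp x - 1 = ∫ s in (0:ℝ)..1, exp (s • x) * x := by
        rw [intervalIntegral.integral_eq_sub_of_hasDerivAt
          (fun s _ => hasDerivAt_exp_smul_const x s) (hint.mul_const x)]
        simp
    _ = (∫ s in (0:ℝ)..1, exp (s • x)) * x :=
        ((ContinuousLinearMap.mul ℝ A).flip x).intervalIntegral_comp_comm hint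

theorem star_exp_mul_mul_exp_eq_self [StarRing A] [ContinuousStar A] {j x : A}
    (h : star x * j = -(j * x)) : star (exp x) * j * exp x = j := by
  let +nondep : NormedAlgebra ℚ A := .restrictScalars ℚ ℝ A
  have hconj : SemiconjBy j x (-star x) := by
    rw [SemiconjBy, neg_mul, h, neg_neg]
  rw [NormedSpace.star_exp]
  simpa only [neg_neg] using hconj.exp_neg_mul_mul_exp_eq_self

end BanachAlgebra

theorem HilbertBasis.hasSum_inner_sq {E : Type*} [NormedAddCommGroup E] [InnerProductSpace ℝ E]
    (b : HilbertBasis ι ℝ E) (v : E) : HasSum (fun i => ⟪v, b i⟫ ^ 2) (‖v‖ ^ 2) := by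
  simpa only [sq, real_inner_comm v, real_inner_self_eq_norm_sq] using b.hasSum_inner_mul_inner v v

namespace IsHS

variable {b : HilbertBasis ι ℝ H} {x y : H →L[ℝ] H}

omit [CompleteSpace H] in
protected theorem mul_left (a : H →L[ℝ] H) (hx : IsHS b x) : IsHS b (a * x) := by
  refine .of_nonneg_of_le (fun _ => sq_nonneg _) (fun i => ?_) (Summable.mul_left (‖a‖ ^ 2) hx)
  rw [← mul_pow]
  exact pow_le_pow_left₀ (norm_nonneg _) (a.le_opNorm _) 2

omit [CompleteSpace H] in
protected theorem add (hx : IsHS b x) (hy : IsHS b y) : IsHS b (x + y) := by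
  refine .of_nonneg_of_le (fun _ => sq_nonneg _) (fun i => ?_) ((Summable.add hx hy).mul_left 2)
  have htri := norm_add_le (x (b i)) (y (b i))
  rw [add_apply]
  nlinarith [norm_nonneg (x (b i) + y (b i)), sq_nonneg (‖x (b i)‖ - ‖y (b i)‖)]

omit [CompleteSpace H] in
protected theorem smul (t : ℝ) (hx : IsHS b x) : IsHS b (t • x) := by
  simpa only [smul_one_mul] using hx.mul_left (t • 1)

omit [CompleteSpace H] in
protected theorem sub (hx : IsHS b x) (hy : IsHS b y) : IsHS b (x - y) := by
  simpa only [sub_eq_add_neg, neg_one_smul] using hx.add (hy.smul (-1))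

protected theorem star (hx : IsHS b x) : IsHS b (star x) := by
  have hrows : Summable fun p : ι × ι => ⟪x (b p.1), b p.2⟫ ^ 2 := by
    refine (summable_prod_of_nonneg fun _ => sq_nonneg _).mpr
      ⟨fun i => (b.hasSum_inner_sq (x (b i))).summable, ?_⟩
    exact Summable.congr hx fun i => (b.hasSum_inner_sq (x (b i))).tsum_eq.symm
  have hcols := ((summable_prod_of_nonneg fun _ => sq_nonneg _).mp hrows.prod_symm).2
  refine hcols.congr fun j => ?_
  rw [← (b.hasSum_inner_sq _).tsum_eq]
  simp only [Prod.swap, star_eq_adjoint, adjoint_inner_left, real_inner_comm]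

theorem exp_sub_one (hx : IsHS b x) : IsHS b (exp x - 1) := by
  rw [exp_sub_one_eq_integral_mul]
  exact hx.mul_left _

omit [CompleteSpace H] in
theorem mul_sub_one {g h : H →L[ℝ] H} (hg : IsHS b (g - 1)) (hh : IsHS b (h - 1)) :
    IsHS b (g * h - 1) := by
  have hsplit : g * h - 1 = g * (h - 1) + (g - 1) := by noncomm_ring
  rw [hsplit]
  exact (hh.mul_left g).add hg

end IsHS

/-- The Lie algebra of `Sp J`. The relation defining `sp2` says that `star v ∈ spLie J`. -/
def spLie (J : H →L[ℝ] H) : Submodule ℝ (H →L[ℝ] H) where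
  carrier := {x | star x * J = -(J * x)}
  add_mem' {x y} (hx : star x * J = -(J * x)) (hy : star y * J = -(J * y)) :
      star (x + y) * J = -(J * (x + y)) := by
    rw [star_add, add_mul, mul_add, hx, hy, neg_add]
  zero_mem' := by simp
  smul_mem' c x (hx : star x * J = -(J * x)) : star (c • x) * J = -(J * (c • x)) := by
    rw [star_smul, star_trivial, smul_mul_assoc, mul_smul_comm, hx, smul_neg]

section Symplectic

variable {J : H →L[ℝ] H}

theorem mem_spLie {x : H →L[ℝ] H} : x ∈ spLie J ↔ star x * J = -(J * x) := Iff.rfl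

theorem mem_spLie_of_star_mem (hJ : J * J = -1) {x : H →L[ℝ] H} (h : star x ∈ spLie J) :
    x ∈ spLie J := by
  rw [mem_spLie, star_star] at h
  have hx : star x = J * x * J := by
    calc star x = -(J * J) * star x := by rw [hJ, neg_neg, one_mul]
      _ = J * x * J := by rw [mul_assoc J x, h]; noncomm_ring
  rw [mem_spLie, hx, mul_assoc, hJ]
  noncomm_ring

theorem mul_mem_Sp {g h : H →L[ℝ] H} (hg : g ∈ Sp J) (hh : h ∈ Sp J) : g * h ∈ Sp J := by
  refine ⟨hg.1.mul hh.1, ?_⟩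
  calc star (g * h) * J * (g * h) = star h * (star g * J * g) * h := by
        simp only [star_mul, mul_assoc]
    _ = J := by rw [hg.2, hh.2]

theorem exp_mem_Sp {x : H →L[ℝ] H} (hx : x ∈ spLie J) : exp x ∈ Sp J := by
  let +nondep : NormedAlgebra ℚ (H →L[ℝ] H) := .restrictScalars ℚ ℝ _
  exact ⟨NormedSpace.isUnit_exp x, star_exp_mul_mul_exp_eq_self hx⟩

variable {b : HilbertBasis ι ℝ H}

theorem mul_mem_Sp2 {g h : H →L[ℝ] H} (hg : g ∈ Sp2 b J) (hh : h ∈ Sp2 b J) :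
    g * h ∈ Sp2 b J :=
  ⟨mul_mem_Sp hg.1 hh.1, hg.2.mul_sub_one hh.2⟩

theorem exp_mem_Sp2 {x : H →L[ℝ] H} (hHS : IsHS b x) (hx : x ∈ spLie J) : exp x ∈ Sp2 b J :=
  ⟨exp_mem_Sp hx, hHS.exp_sub_one⟩

end Symplectic

/-- the geodesic `α(t) = g₀ e^{t v₀*} e^{t(v₀ - v₀*)}` stays in `Sp₂(H)`. -/
theorem geodesic_stays_in_Sp2 (b : HilbertBasis ι ℝ H) (J : H →L[ℝ] H)
    (hJ : IsCplxStruct J) (g₀ v₀ : H →L[ℝ] H)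
    (hg₀ : g₀ ∈ Sp2 b J) (hv₀ : v₀ ∈ sp2 b J) :
    ∀ t : ℝ, g₀ * NormedSpace.exp (t • star v₀) *
      NormedSpace.exp (t • (v₀ - star v₀)) ∈ Sp2 b J := by
  intro t
  obtain ⟨hHS, hvJ⟩ := hv₀
  have hstar : star v₀ ∈ spLie J := by rwa [mem_spLie, star_star]
  have hv : v₀ ∈ spLie J := mem_spLie_of_star_mem hJ.1 hstar
  have hE₁ : exp (t • star v₀) ∈ Sp2 b J :=
    exp_mem_Sp2 (hHS.star.smul t) (Submodule.smul_mem _ t hstar)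
  have hE₂ : exp (t • (v₀ - star v₀)) ∈ Sp2 b J :=
    exp_mem_Sp2 ((hHS.sub hHS.star).smul t) (Submodule.smul_mem _ t (sub_mem hv hstar))
  exact mul_mem_Sp2 (mul_mem_Sp2 hg₀ hE₁) hE₂
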